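/- Let N ≥ 3 be an integer, let C₀ > 0, and let f : ℝ → ℝ be a function of class C^{N-1} satisfying |f^{(n)}(x)| ≤ C₀ (1+|x|)^{1-n} for all x ∈ ℝ and all integers n with 1 ≤ n ≤ N-1. For a₁, …, a_N ∈ ℝ define the divided difference [a₁,…,a_N]_f = ∫_{Δ_{N-1}} f^{(N-1)}( a₁ + Σ_{i=2}^{N} c_i (a_i - a₁) ) dc₂ ⋯ dc_N over the standard simplex Δ_{N-1} = { (c₂,…,c_N) : c_i ≥ 0, Σ c_i ≤ 1 }. Then for every integer n with 1 ≤ n < N there exists a finite constant C'_N (depending only on N and C₀) such that: whenever λ ≥ 0 and a₁,…,a_N ∈ ℝ satisfy a_i ≤ -λ for all 1 ≤ i ≤ n and a_i ≥ λ for all n+1 ≤ i ≤ N, one has |[a₁,…,a_N]_f| ≤ C'_N / (1+λ)^{N-2}. -/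

import Mathlib

open MeasureTheory

namespace DDAux
noncomputable section

def Splx (k : ℕ) : Set (Fin k → ℝ) := {c | (∀ i, 0 ≤ c i) ∧ ∑ i, c i ≤ 1}

lemma isClosed_splx (k : ℕ) : IsClosed (Splx k) := by
  have : Splx k = (⋂ i, {c : Fin k → ℝ | 0 ≤ c i}) ∩ {c : Fin k → ℝ | ∑ i, c i ≤ 1} := by
    ext c; simp [Splx, Set.mem_iInter]
  rw [this]
  exact IsClosed.inter (isClosed_iInter fun i =>
    isClosed_le continuous_const (continuous_apply i))
    (isClosed_le (by fun_prop) continuous_const)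

lemma splx_subset (k : ℕ) :
    Splx k ⊆ Set.pi Set.univ fun _ : Fin k => Set.Icc (0:ℝ) 1 := by
  rintro c ⟨h0, h1⟩ i _
  refine ⟨h0 i, ?_⟩
  calc c i ≤ ∑ j, c j := Finset.single_le_sum (fun j _ => h0 j) (Finset.mem_univ i)
    _ ≤ 1 := h1

lemma isCompact_splx (k : ℕ) : IsCompact (Splx k) :=
  IsCompact.of_isClosed_subset (isCompact_univ_pi fun _ => isCompact_Icc)
    (isClosed_splx k) (splx_subset k)

def J (k : ℕ) (f : ℝ → ℝ) (a : Fin (k+1) → ℝ) : ℝ :=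
  ∫ c in Splx k, iteratedDeriv k f (a 0 + ∑ i : Fin k, c i * (a i.succ - a 0))

lemma J_rec (k : ℕ) (f : ℝ → ℝ) (hf : ContDiff ℝ ((k:ℕ)+1) f)
    {B : ℝ} (hB : ∀ x, |iteratedDeriv (k+1) f x| ≤ B)
    (a : Fin (k+2) → ℝ) (i : Fin (k+1)) (hD : a i.succ - a 0 ≠ 0) :
    J (k+1) f a = (a i.succ - a 0)⁻¹ *
      (J k f (fun j => if j = 0 then a i.succ else a (i.succ.succAbove j))
       - J k f (a ∘ i.succ.succAbove)) := by
  classical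
  set D := a i.succ - a 0 with hDdef
  set g := iteratedDeriv (k+1) f with hg
  set G := iteratedDeriv k f with hGdef
  have hgcont : Continuous g := hf.continuous_iteratedDeriv (k+1) (by exact_mod_cast le_rfl)
  have hGcont : Continuous G := hf.continuous_iteratedDeriv k (by exact_mod_cast Nat.le_succ k)
  have hGdiff : Differentiable ℝ G :=
    hf.differentiable_iteratedDeriv k (by exact_mod_cast Nat.lt_succ_self k)
  set T : Set (ℝ × (Fin k → ℝ)) :=
    {p | (0 ≤ p.1 ∧ ∀ m, 0 ≤ p.2 m) ∧ p.1 + ∑ m, p.2 m ≤ 1} with hTdef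
  set gT : ℝ × (Fin k → ℝ) → ℝ :=
    fun p => g (a 0 + p.1 * D + ∑ m, p.2 m * (a (i.succAbove m).succ - a 0)) with hgTdef
  set ν : Measure (ℝ × (Fin k → ℝ)) :=
    (volume : Measure ℝ).prod (Measure.pi fun _ : Fin k => volume) with hνdef
  -- change of variables
  have mp := measurePreserving_piFinSuccAbove (fun _ : Fin (k+1) => (volume : Measure ℝ)) i
  have φemb := (MeasurableEquiv.piFinSuccAbove (fun _ : Fin (k+1) => ℝ) i).measurableEmbedding
  have key := mp.setIntegral_preimage_emb φemb gT T
  have hpre : (MeasurableEquiv.piFinSuccAbove (fun _ : Fin (k+1) => ℝ) i) ⁻¹' T = Splx (k+1) := by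
    ext c
    simp only [Set.mem_preimage, MeasurableEquiv.piFinSuccAbove_apply, hTdef, Set.mem_setOf_eq,
      Fin.insertNthEquiv_symm_apply, Fin.removeNth, Splx]
    have hsum : ∑ j, c j = c i + ∑ m, c (i.succAbove m) := Fin.sum_univ_succAbove (fun j => c j) i
    constructor
    · rintro ⟨⟨h1, h2⟩, h3⟩
      exact ⟨(Fin.forall_iff_succAbove i).2 ⟨h1, h2⟩, by rw [hsum]; exact h3⟩
    · rintro ⟨h1, h2⟩
      exact ⟨⟨h1 i, fun m => h1 _⟩, by rw [← hsum]; exact h2⟩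
  have hfun : ∀ c : Fin (k+1) → ℝ,
      gT ((MeasurableEquiv.piFinSuccAbove (fun _ : Fin (k+1) => ℝ) i) c)
        = g (a 0 + ∑ j, c j * (a j.succ - a 0)) := by
    intro c
    simp only [hgTdef, MeasurableEquiv.piFinSuccAbove_apply, Fin.insertNthEquiv_symm_apply,
      Fin.removeNth]
    rw [Fin.sum_univ_succAbove (fun j => c j * (a j.succ - a 0)) i]
    congr 1
    rw [hDdef]
    ring
  have step1 : J (k+1) f a = ∫ p in T, gT p ∂ν := by
    rw [J, volume_pi, ← key, hpre]
    exact setIntegral_congr_fun (isClosed_splx (k+1)).measurableSet fun c _ => (hfun c).symm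
  -- measurability and integrability over T
  have hTclosed : IsClosed T := by
    have hrepr : T = ({p : ℝ × (Fin k → ℝ) | 0 ≤ p.1} ∩ ⋂ m, {p : ℝ × (Fin k → ℝ) | 0 ≤ p.2 m}) ∩
        {p : ℝ × (Fin k → ℝ) | p.1 + ∑ m, p.2 m ≤ 1} := by
      ext p
      simp only [hTdef, Set.mem_setOf_eq, Set.mem_inter_iff, Set.mem_iInter]
    rw [hrepr]
    refine IsClosed.inter (IsClosed.inter ?_ ?_) ?_
    · exact isClosed_le continuous_const continuous_fst
    · exact isClosed_iInter fun m => isClosed_le continuous_const (by fun_prop)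
    · exact isClosed_le (by fun_prop) continuous_const
  have hTmeas := hTclosed.measurableSet
  have hgTcont : Continuous gT := hgcont.comp (by fun_prop)
  have hTfin : ν T ≠ ⊤ := by
    have hsub : T ⊆ (Set.Icc (0:ℝ) 1) ×ˢ (Set.pi Set.univ fun _ : Fin k => Set.Icc (0:ℝ) 1) := by
      rintro ⟨t, c'⟩ ⟨⟨h1, h2⟩, h3⟩
      have hsumnn : (0:ℝ) ≤ ∑ m, c' m := Finset.sum_nonneg fun j _ => h2 j
      have hc : ∀ m, c' m ≤ 1 := fun m => by
        have h4 := Finset.single_le_sum (fun j _ => h2 j) (Finset.mem_univ m)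
        linarith
      exact ⟨⟨h1, by linarith⟩, fun m _ => ⟨h2 m, hc m⟩⟩
    refine ne_of_lt (lt_of_le_of_lt (measure_mono hsub) ?_)
    rw [hνdef, Measure.prod_prod, Measure.pi_pi]
    simp [Real.volume_Icc]
  have hIntOn : IntegrableOn gT T ν :=
    Measure.integrableOn_of_bounded hTfin hgTcont.aestronglyMeasurable
      (ae_of_all _ fun p => by simpa [Real.norm_eq_abs] using hB _)
  have hIndInt : Integrable (T.indicator gT) ν := hIntOn.integrable_indicator hTmeas
  rw [step1, ← integral_indicator hTmeas, hνdef,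
    integral_prod_symm _ (by rwa [hνdef] at hIndInt)]
  -- evaluate inner integral
  have hinner : ∀ c' : Fin k → ℝ, (∫ t, T.indicator gT (t, c')) =
      (Splx k).indicator (fun c'' => ∫ t in Set.Icc (0:ℝ) (1 - ∑ m, c'' m), gT (t, c'')) c' := by
    intro c'
    by_cases hmem : c' ∈ Splx k
    · rw [Set.indicator_of_mem hmem]
      have hptw : ∀ t : ℝ, T.indicator gT (t, c') =
          (Set.Icc (0:ℝ) (1 - ∑ m, c' m)).indicator (fun t => gT (t, c')) t := by
        intro t
        by_cases ht : t ∈ Set.Icc (0:ℝ) (1 - ∑ m, c' m)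
        · rw [Set.indicator_of_mem ht, Set.indicator_of_mem]
          exact ⟨⟨ht.1, hmem.1⟩, by have h5 := ht.2; linarith⟩
        · rw [Set.indicator_of_notMem ht, Set.indicator_of_notMem]
          intro hTm
          exact ht ⟨hTm.1.1, by have h5 := hTm.2; linarith⟩
      simp_rw [hptw]
      exact integral_indicator measurableSet_Icc
    · rw [Set.indicator_of_notMem hmem]
      have hptw : ∀ t : ℝ, T.indicator gT (t, c') = 0 := fun t => by
        apply Set.indicator_of_notMem
        intro hTm
        exact hmem ⟨hTm.1.2, by have h1 := hTm.1.1; have h2 := hTm.2; linarith⟩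
      simp [hptw]
  simp_rw [hinner]
  rw [integral_indicator (isClosed_splx k).measurableSet, ← volume_pi]
  -- FTC in the inner variable
  have hFTC : ∀ c' ∈ Splx k,
      (∫ t in Set.Icc (0:ℝ) (1 - ∑ m, c' m), gT (t, c')) =
      D⁻¹ * (G (a i.succ + ∑ m, c' m * (a (i.succAbove m).succ - a i.succ))
           - G (a 0 + ∑ m, c' m * (a (i.succAbove m).succ - a 0))) := by
    intro c' hmem
    set L : ℝ := 1 - ∑ m, c' m with hL
    have hL0 : 0 ≤ L := by have h5 := hmem.2; simp only [hL]; linarith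
    set S : ℝ := ∑ m, c' m * (a (i.succAbove m).succ - a 0) with hS
    have hgTeq : ∀ t : ℝ, gT (t, c') = g (a 0 + t * D + S) := fun t => rfl
    have hderiv : ∀ t ∈ Set.uIcc (0:ℝ) L,
        HasDerivAt (fun t => D⁻¹ * G (a 0 + t * D + S)) (gT (t, c')) t := by
      intro t _
      have h1 : HasDerivAt (fun t : ℝ => a 0 + t * D + S) D t := by
        simpa using (((hasDerivAt_id t).mul_const D).const_add (a 0)).add_const S
      have h2 : HasDerivAt G (g (a 0 + t * D + S)) (a 0 + t * D + S) := by
        have h3 := (hGdiff (a 0 + t * D + S)).hasDerivAt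
        have h4 : deriv G (a 0 + t * D + S) = g (a 0 + t * D + S) := by
          rw [hg, iteratedDeriv_succ, hGdef]
        rwa [h4] at h3
      have h4 := (h2.comp t h1).const_mul D⁻¹
      have h5 : D⁻¹ * (g (a 0 + t * D + S) * D) = gT (t, c') := by
        rw [hgTeq]
        field_simp
      rw [← h5]
      exact h4
    have hii : IntervalIntegrable (fun t => gT (t, c')) volume 0 L :=
      (hgTcont.comp (by fun_prop)).intervalIntegrable 0 L
    rw [MeasureTheory.integral_Icc_eq_integral_Ioc, ← intervalIntegral.integral_of_le hL0,
      intervalIntegral.integral_eq_sub_of_hasDerivAt hderiv hii]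
    have e0 : a 0 + 0 * D + S = a 0 + ∑ m, c' m * (a (i.succAbove m).succ - a 0) := by
      rw [hS]; ring
    have e1 : a 0 + L * D + S
        = a i.succ + ∑ m, c' m * (a (i.succAbove m).succ - a i.succ) := by
      rw [hL, hS, hDdef]
      simp only [mul_sub, Finset.sum_sub_distrib, ← Finset.sum_mul]
      ring
    simp only [e0, e1]
    ring
  rw [setIntegral_congr_fun (isClosed_splx k).measurableSet hFTC, integral_const_mul]
  congr 1
  have hint1 : IntegrableOn (fun c' : Fin k → ℝ =>
      G (a i.succ + ∑ m, c' m * (a (i.succAbove m).succ - a i.succ))) (Splx k) volume :=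
    ((hGcont.comp (by fun_prop)).continuousOn).integrableOn_compact (isCompact_splx k)
  have hint2 : IntegrableOn (fun c' : Fin k → ℝ =>
      G (a 0 + ∑ m, c' m * (a (i.succAbove m).succ - a 0))) (Splx k) volume :=
    ((hGcont.comp (by fun_prop)).continuousOn).integrableOn_compact (isCompact_splx k)
  rw [integral_sub hint1 hint2]
  congr 1
  · rw [J]
    refine setIntegral_congr_fun (isClosed_splx k).measurableSet fun c' _ => ?_
    simp [Fin.succ_ne_zero, hGdef]
  · rw [J]
    refine setIntegral_congr_fun (isClosed_splx k).measurableSet fun c' _ => ?_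
    simp [Fin.succ_ne_zero, hGdef]


lemma volume_splx_lt_top (k : ℕ) : volume (Splx k) < ⊤ := by
  refine lt_of_le_of_lt (measure_mono (splx_subset k)) ?_
  rw [volume_pi_pi]
  simp [Real.volume_Icc]

lemma volume_splx_le_one (k : ℕ) : (volume (Splx k)).toReal ≤ 1 := by
  have h := measure_mono (μ := volume) (splx_subset k)
  rw [volume_pi_pi] at h
  simp only [Real.volume_Icc, sub_zero, ENNReal.ofReal_one, Finset.prod_const_one] at h
  calc (volume (Splx k)).toReal ≤ (1 : ENNReal).toReal :=
        ENNReal.toReal_mono (by simp) h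
    _ = 1 := by simp

lemma zero_mem_splx (k : ℕ) : (0 : Fin k → ℝ) ∈ Splx k := by
  constructor
  · intro i; simp
  · simp

lemma abs_J_le {k : ℕ} {f : ℝ → ℝ} {a : Fin (k+1) → ℝ} {B : ℝ}
    (hc : Continuous (iteratedDeriv k f))
    (hB : ∀ c ∈ Splx k,
      |iteratedDeriv k f (a 0 + ∑ i : Fin k, c i * (a i.succ - a 0))| ≤ B) :
    |J k f a| ≤ B := by
  have hB0 : 0 ≤ B := le_trans (abs_nonneg _) (hB 0 (zero_mem_splx k))
  have hmeas : AEStronglyMeasurable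
      (fun c : Fin k → ℝ => iteratedDeriv k f (a 0 + ∑ i : Fin k, c i * (a i.succ - a 0)))
      (volume.restrict (Splx k)) := by
    apply Continuous.aestronglyMeasurable
    exact hc.comp (by fun_prop)
  have h := norm_setIntegral_le_of_norm_le_const (μ := volume) (s := Splx k)
    (f := fun c : Fin k → ℝ => iteratedDeriv k f (a 0 + ∑ i : Fin k, c i * (a i.succ - a 0)))
    (volume_splx_lt_top k) (C := B) (fun c hcmem => by
      simpa [Real.norm_eq_abs] using hB c hcmem)
  rw [Real.norm_eq_abs] at h
  calc |J k f a| ≤ B * (volume (Splx k)).toReal := h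
    _ ≤ B * 1 := by
        exact mul_le_mul_of_nonneg_left (volume_splx_le_one k) hB0
    _ = B := mul_one B


lemma le_comb {k : ℕ} {lam : ℝ} {a : Fin (k+1) → ℝ} (h : ∀ j, lam ≤ a j)
    {c : Fin k → ℝ} (hc : c ∈ Splx k) :
    lam ≤ a 0 + ∑ i : Fin k, c i * (a i.succ - a 0) := by
  have h1 : ∑ i : Fin k, c i * (lam - a 0) ≤ ∑ i : Fin k, c i * (a i.succ - a 0) :=
    Finset.sum_le_sum fun i _ =>
      mul_le_mul_of_nonneg_left (by have := h i.succ; linarith) (hc.1 i)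
  have h2 : ∑ i : Fin k, c i * (lam - a 0) = (∑ i : Fin k, c i) * (lam - a 0) := by
    rw [Finset.sum_mul]
  have h5 : 0 ≤ (1 - ∑ i : Fin k, c i) * (a 0 - lam) :=
    mul_nonneg (by linarith [hc.2]) (by linarith [h 0])
  nlinarith [h1, h2, h5]

lemma comb_le {k : ℕ} {lam : ℝ} {a : Fin (k+1) → ℝ} (h : ∀ j, a j ≤ -lam)
    {c : Fin k → ℝ} (hc : c ∈ Splx k) :
    a 0 + ∑ i : Fin k, c i * (a i.succ - a 0) ≤ -lam := by
  have h1 : ∑ i : Fin k, c i * (a i.succ - a 0) ≤ ∑ i : Fin k, c i * (-lam - a 0) :=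
    Finset.sum_le_sum fun i _ =>
      mul_le_mul_of_nonneg_left (by have := h i.succ; linarith) (hc.1 i)
  have h2 : ∑ i : Fin k, c i * (-lam - a 0) = (∑ i : Fin k, c i) * (-lam - a 0) := by
    rw [Finset.sum_mul]
  have h5 : 0 ≤ (1 - ∑ i : Fin k, c i) * (-lam - a 0) :=
    mul_nonneg (by linarith [hc.2]) (by linarith [h 0])
  nlinarith [h1, h2, h5]


lemma main (C₀ : ℝ) (hC₀ : 0 < C₀) (K : ℕ) (f : ℝ → ℝ) (hf : ContDiff ℝ (K : ℕ) f)
    (hd : ∀ m : ℕ, 1 ≤ m → m ≤ K → ∀ x : ℝ,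
      |iteratedDeriv m f x| * (1 + |x|) ^ (m - 1) ≤ C₀) :
    ∀ k : ℕ, 1 ≤ k → k ≤ K → ∀ lam : ℝ, 0 ≤ lam → ∀ a : Fin (k+1) → ℝ,
      (∀ j, a j ≤ -lam ∨ lam ≤ a j) →
      |J k f a| * (1 + lam) ^ (k-1) ≤ C₀ * 2 ^ k := by
  intro k hk
  induction k, hk using Nat.le_induction with
  | base =>
    intro hK lam hlam a _
    have hcont : Continuous (iteratedDeriv 1 f) :=
      hf.continuous_iteratedDeriv 1 (by exact_mod_cast hK)
    have hJ : |J 1 f a| ≤ C₀ := by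
      refine abs_J_le hcont fun c _ => ?_
      have h1 := hd 1 le_rfl hK (a 0 + ∑ i : Fin 1, c i * (a i.succ - a 0))
      simpa using h1
    simpa using le_trans hJ (by nlinarith)
  | succ n hn ih =>
    intro hK lam hlam a hsplit
    obtain ⟨j, rfl⟩ : ∃ j, n = j + 1 := ⟨n - 1, by omega⟩
    have hb1 : (0:ℝ) < 1 + lam := by linarith
    have hgB : ∀ x : ℝ, |iteratedDeriv (j+1+1) f x| ≤ C₀ := by
      intro x
      have h1 := hd (j+2) (by omega) hK x
      have h2 : (1:ℝ) ≤ (1 + |x|) ^ (j+2-1) := one_le_pow₀ (by linarith [abs_nonneg x])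
      calc |iteratedDeriv (j+1+1) f x|
          ≤ |iteratedDeriv (j+1+1) f x| * (1 + |x|) ^ (j+2-1) :=
            le_mul_of_one_le_right (abs_nonneg _) h2
        _ ≤ C₀ := h1
    have hcont : Continuous (iteratedDeriv (j+1+1) f) :=
      hf.continuous_iteratedDeriv (j+2) (by exact_mod_cast hK)
    by_cases hone : (∀ jj, lam ≤ a jj) ∨ (∀ jj, a jj ≤ -lam)
    · have hJ : |J (j+1+1) f a| ≤ C₀ / (1 + lam) ^ (j+1) := by
        refine abs_J_le hcont fun c hc => ?_
        set x := a 0 + ∑ i : Fin (j+1+1), c i * (a i.succ - a 0) with hx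
        have hxlam : lam ≤ |x| := by
          rcases hone with hpos | hneg
          · exact le_trans (le_comb hpos hc) (le_abs_self x)
          · have h3 := comb_le hneg hc
            calc lam ≤ -x := by linarith
              _ ≤ |x| := neg_le_abs x
        rw [le_div_iff₀ (pow_pos hb1 _)]
        have hmono : (1 + lam) ^ (j+1) ≤ (1 + |x|) ^ (j+1) :=
          pow_le_pow_left₀ (by linarith) (by linarith) _
        calc |iteratedDeriv (j+1+1) f x| * (1 + lam) ^ (j+1)
            ≤ |iteratedDeriv (j+1+1) f x| * (1 + |x|) ^ (j+1) :=
              mul_le_mul_of_nonneg_left hmono (abs_nonneg _)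
          _ ≤ C₀ := hd (j+2) (by omega) hK x
      have h2 : |J (j+1+1) f a| * (1 + lam) ^ (j+1+1-1) ≤ C₀ :=
        (le_div_iff₀ (pow_pos hb1 (j+1))).mp hJ
      have h3 : (1:ℝ) ≤ 2 ^ (j+1+1) := one_le_pow₀ (by norm_num)
      calc |J (j+1+1) f a| * (1 + lam) ^ (j+1+1-1) ≤ C₀ := h2
        _ ≤ C₀ * 2 ^ (j+1+1) := by nlinarith
    · push_neg at hone
      obtain ⟨⟨q1, hq1⟩, q0, hq0⟩ := hone
      have hq1' : a q1 ≤ -lam := (hsplit q1).resolve_right (not_le.mpr hq1)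
      have hq0' : lam ≤ a q0 := (hsplit q0).resolve_left (not_le.mpr hq0)
      by_cases hlam1 : lam ≤ 1
      · have hJ : |J (j+1+1) f a| ≤ C₀ := abs_J_le hcont fun c _ => hgB _
        have hp : (1 + lam) ^ (j+1) ≤ 2 ^ (j+1) :=
          pow_le_pow_left₀ (by linarith) (by linarith) _
        calc |J (j+1+1) f a| * (1 + lam) ^ (j+1+1-1)
            ≤ C₀ * 2 ^ (j+1) := mul_le_mul hJ hp (by positivity) hC₀.le
          _ ≤ C₀ * 2 ^ (j+1+1) := by
              have h4 : (2:ℝ) ^ (j+1) ≤ 2 ^ (j+1+1) :=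
                pow_le_pow_right₀ (by norm_num) (by omega)
              nlinarith
      · push_neg at hlam1
        -- find an index i with a i.succ and a 0 of opposite signs
        have hmix : ∃ i : Fin (j+1+1), a i.succ - a 0 ≤ -(2*lam) ∨ 2*lam ≤ a i.succ - a 0 := by
          rcases hsplit 0 with h0 | h0
          · have hq0ne : q0 ≠ 0 := by
              intro hq; rw [hq] at hq0'; linarith
            refine ⟨q0.pred hq0ne, Or.inr ?_⟩
            rw [Fin.succ_pred]
            linarith
          · have hq1ne : q1 ≠ 0 := by
              intro hq; rw [hq] at hq1'; linarith
            refine ⟨q1.pred hq1ne, Or.inl ?_⟩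
            rw [Fin.succ_pred]
            linarith
        obtain ⟨i, hDi⟩ := hmix
        set D := a i.succ - a 0 with hDdef
        have hDabs : 2 * lam ≤ |D| := by
          rcases hDi with h | h
          · rw [abs_of_nonpos (by linarith)]; linarith
          · rw [abs_of_nonneg (by linarith)]; linarith
        have hDne : D ≠ 0 := by
          intro h; rw [h] at hDabs; simp at hDabs; linarith
        have hrec := J_rec (j+1) f (hf.of_le (by exact_mod_cast hK)) hgB a i hDne
        set a1 : Fin (j+2) → ℝ :=
          fun jj => if jj = 0 then a i.succ else a (i.succ.succAbove jj) with ha1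
        set a2 : Fin (j+2) → ℝ := a ∘ i.succ.succAbove with ha2
        have hsplit1 : ∀ jj, a1 jj ≤ -lam ∨ lam ≤ a1 jj := by
          intro jj
          rw [ha1]
          by_cases hjj : jj = 0 <;> simp [hjj] <;> exact hsplit _
        have hsplit2 : ∀ jj, a2 jj ≤ -lam ∨ lam ≤ a2 jj := fun jj => hsplit _
        have hJ1 := ih (by omega) lam hlam a1 hsplit1
        have hJ2 := ih (by omega) lam hlam a2 hsplit2
        -- hJ1 : |J (j+1) f a1| * (1+lam)^j ≤ C₀ * 2^(j+1)
        have hDpos : (0:ℝ) < |D| := abs_pos.mpr hDne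
        have hPpos : (0:ℝ) < (1 + lam) ^ j := pow_pos hb1 j
        have habs : |J (j+1+1) f a| ≤ |D|⁻¹ * (|J (j+1) f a1| + |J (j+1) f a2|) := by
          rw [hrec, abs_mul, abs_inv]
          exact mul_le_mul_of_nonneg_left (abs_sub _ _) (by positivity)
        have hJ1' : |J (j+1) f a1| ≤ C₀ * 2 ^ (j+1) / (1 + lam) ^ j := by
          rw [le_div_iff₀ hPpos]
          simpa using hJ1
        have hJ2' : |J (j+1) f a2| ≤ C₀ * 2 ^ (j+1) / (1 + lam) ^ j := by
          rw [le_div_iff₀ hPpos]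
          simpa using hJ2
        have hDinv : |D|⁻¹ ≤ (2 * lam)⁻¹ := by
          apply inv_anti₀ (by linarith) hDabs
        have hstep : |J (j+1+1) f a| ≤ (2 * lam)⁻¹ * (2 * (C₀ * 2 ^ (j+1) / (1 + lam) ^ j)) := by
          refine le_trans habs ?_
          have hsum : |J (j+1) f a1| + |J (j+1) f a2| ≤ 2 * (C₀ * 2 ^ (j+1) / (1 + lam) ^ j) := by
            linarith
          apply mul_le_mul hDinv hsum (by positivity) (by positivity)
        have hfrac : (2 * lam)⁻¹ * (1 + lam) ≤ 1 := by
          rw [inv_mul_le_iff₀ (by linarith)]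
          linarith
        have hpowsplit : (1 + lam) ^ (j+1+1-1) = (1 + lam) ^ j * (1 + lam) := pow_succ _ _
        calc |J (j+1+1) f a| * (1 + lam) ^ (j+1+1-1)
            ≤ ((2 * lam)⁻¹ * (2 * (C₀ * 2 ^ (j+1) / (1 + lam) ^ j))) * ((1 + lam) ^ j * (1 + lam)) := by
              rw [hpowsplit]
              exact mul_le_mul_of_nonneg_right hstep (by positivity)
          _ = ((2 * lam)⁻¹ * (1 + lam)) * (2 * (C₀ * 2 ^ (j+1) / (1 + lam) ^ j * (1 + lam) ^ j)) := by
              ring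
          _ ≤ 1 * (2 * (C₀ * 2 ^ (j+1) / (1 + lam) ^ j * (1 + lam) ^ j)) := by
              apply mul_le_mul_of_nonneg_right hfrac (by positivity)
          _ = 2 * (C₀ * 2 ^ (j+1)) := by
              field_simp
          _ = C₀ * 2 ^ (j+1+1) := by ring


end
end DDAux

/-- Second part of Lemma 8.1 of Frank–Hainzl–Seiringer–Solovej: if the arguments of the
divided difference `[a₁,…,a_N]_f` (expressed via the Hermite–Genocchi simplex formula)
split into a group `≤ -λ` and a group `≥ λ`, then the divided difference decays like
`(1+λ)^{-(N-2)}`. -/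
theorem divided_difference_split_decay (N : ℕ) (hN : 3 ≤ N) (C₀ : ℝ) (hC₀ : 0 < C₀) :
    ∃ C' : ℝ, ∀ n : ℕ, 1 ≤ n → n < N →
      ∀ f : ℝ → ℝ, ContDiff ℝ (N - 1 : ℕ) f →
      (∀ m : ℕ, 1 ≤ m → m ≤ N - 1 → ∀ x : ℝ,
        |iteratedDeriv m f x| ≤ C₀ * (1 + |x|) ^ ((1 : ℝ) - m)) →
      ∀ (lam : ℝ), 0 ≤ lam → ∀ a : Fin N → ℝ,
      (∀ i : Fin N, i.1 < n → a i ≤ -lam) → (∀ i : Fin N, n ≤ i.1 → lam ≤ a i) →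
        |∫ c in {c : Fin (N - 1) → ℝ | (∀ i, 0 ≤ c i) ∧ ∑ i, c i ≤ 1},
            iteratedDeriv (N - 1) f
              (a ⟨0, by omega⟩ + ∑ i : Fin (N - 1),
                c i * (a ⟨i.1 + 1, by have := i.isLt; omega⟩ - a ⟨0, by omega⟩))|
          ≤ C' / (1 + lam) ^ (N - 2) := by
  obtain ⟨M, rfl⟩ : ∃ M, N = M + 3 := ⟨N - 3, by omega⟩
  refine ⟨C₀ * 2 ^ (M + 2), ?_⟩
  intro n hn1 hn2 f hf hd lam hlam a hneg hpos
  have hb1 : (0:ℝ) < 1 + lam := by linarith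
  have hsplit : ∀ j : Fin (M+3), a j ≤ -lam ∨ lam ≤ a j := fun j => by
    rcases lt_or_ge (j:ℕ) n with h | h
    · exact Or.inl (hneg j h)
    · exact Or.inr (hpos j h)
  have hd' : ∀ m : ℕ, 1 ≤ m → m ≤ M + 2 → ∀ x : ℝ,
      |iteratedDeriv m f x| * (1 + |x|) ^ (m - 1) ≤ C₀ := by
    intro m hm1 hm2 x
    have h1 := hd m hm1 hm2 x
    have hbx : (0:ℝ) < 1 + |x| := by positivity
    have hcast : ((1:ℝ) - m) = -(((m - 1 : ℕ)) : ℝ) := by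
      have : ((m - 1 : ℕ) : ℝ) = (m : ℝ) - 1 := by
        push_cast [Nat.cast_sub hm1]; ring
      rw [this]; ring
    rw [hcast, Real.rpow_neg hbx.le, Real.rpow_natCast] at h1
    have hpowpos : (0:ℝ) < (1 + |x|) ^ (m - 1) := pow_pos hbx _
    calc |iteratedDeriv m f x| * (1 + |x|) ^ (m - 1)
        ≤ (C₀ * ((1 + |x|) ^ (m - 1))⁻¹) * (1 + |x|) ^ (m - 1) :=
          mul_le_mul_of_nonneg_right h1 hpowpos.le
      _ = C₀ := by field_simp
  have hmain := DDAux.main C₀ hC₀ (M + 2) f hf hd' (M + 2) (by omega) le_rfl lam hlam a hsplit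
  have hIeq : (∫ c in {c : Fin (M + 3 - 1) → ℝ | (∀ i, 0 ≤ c i) ∧ ∑ i, c i ≤ 1},
            iteratedDeriv (M + 3 - 1) f
              (a ⟨0, by omega⟩ + ∑ i : Fin (M + 3 - 1),
                c i * (a ⟨i.1 + 1, by have := i.isLt; omega⟩ - a ⟨0, by omega⟩)))
      = DDAux.J (M + 2) f a := rfl
  rw [hIeq]
  rw [le_div_iff₀ (by positivity)]
  simpa using hmain
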